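/- If D is bipartite, then B is signable and moreover B_{i,j} ≤ |(B⁻¹)_{i,j}| for all i < j (i.e., D is a subgraph of its parity closure D⁺). -/

import Mathlib

open Matrix

/-- A square integer matrix `M` is *signable* if there is a signing vector `s`
(valued in `{+1, -1}`) with `s i * M i j * s j = |M i j|` for all `i, j`. -/
def IsSignable {k : ℕ} (M : Matrix (Fin k) (Fin k) ℤ) : Prop :=
  ∃ s : Fin k → ℤ, (∀ i, s i = 1 ∨ s i = -1) ∧ ∀ i j, s i * M i j * s j = |M i j|

/-- `{i, j}` is an edge of the maximal-path subgraph `Γ_D` of the digraph `D` with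
adjacency matrix `B - 1`: there is an edge from `i` to `j` and no directed path
of length `≥ 2` from `i` to `j`. -/
def GammaEdge {k : ℕ} (B : Matrix (Fin k) (Fin k) ℤ) (i j : Fin k) : Prop :=
  i < j ∧ 1 ≤ B i j ∧ ∀ m : ℕ, 2 ≤ m → ((B - 1) ^ m) i j = 0

/-- The maximal-path subgraph `Γ_D` is bipartite. -/
def GammaBipartite {k : ℕ} (B : Matrix (Fin k) (Fin k) ℤ) : Prop :=
  ∃ c : Fin k → Bool, ∀ i j : Fin k, GammaEdge B i j → c i ≠ c j

open Classical in
/-- The pairing `⟨i,j⟩`: it is `1` on the diagonal, `(-1)^ℓ(i,j)` where `ℓ(i,j)` is the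
length of a longest directed path from `i` to `j` when such a path exists, and `0`
otherwise. -/
noncomputable def pairing {k : ℕ} (B : Matrix (Fin k) (Fin k) ℤ) (i j : Fin k) : ℤ :=
  if i = j then 1
  else if ∃ m : ℕ, 1 ≤ m ∧ ((B - 1) ^ m) i j ≠ 0 then
    (-1 : ℤ) ^ sSup {m : ℕ | 1 ≤ m ∧ ((B - 1) ^ m) i j ≠ 0}
  else 0

/-- `B⁽ᵛ⁾`: the matrix obtained from `B` by replacing every off-diagonal entry in row
`v` and in column `v` by `0` (deleting the vertex `v` from the digraph). -/
def vertexDelete {k : ℕ} (B : Matrix (Fin k) (Fin k) ℤ) (v : Fin k) :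
    Matrix (Fin k) (Fin k) ℤ :=
  Matrix.of fun i j => if i ≠ j ∧ (i = v ∨ j = v) then 0 else B i j

/-- `(i,j)` is a zero pair: no directed path from `i` to `j`. -/
def ZeroPair {k : ℕ} (B : Matrix (Fin k) (Fin k) ℤ) (i j : Fin k) : Prop :=
  ∀ m : ℕ, 1 ≤ m → ((B - 1) ^ m) i j = 0

/-- `(i,j)` is a unit pair: all directed paths from `i` to `j` have length one. -/
def UnitPair {k : ℕ} (B : Matrix (Fin k) (Fin k) ℤ) (i j : Fin k) : Prop :=
  1 ≤ B i j ∧ ∀ m : ℕ, 2 ≤ m → ((B - 1) ^ m) i j = 0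

/-- `(i,j)` is a composite pair: every directed path from `i` to `j` passes through
some fixed intermediate vertex `v`. -/
def CompositePair {k : ℕ} (B : Matrix (Fin k) (Fin k) ℤ) (i j : Fin k) : Prop :=
  ∃ v : Fin k, i < v ∧ v < j ∧ ∀ m : ℕ, 1 ≤ m → ((vertexDelete B v - 1) ^ m) i j = 0

/-- `(i,j)` is a prime pair: `i < j` and `(i,j)` is neither a zero pair, a unit pair,
nor a composite pair. -/
def PrimePair {k : ℕ} (B : Matrix (Fin k) (Fin k) ℤ) (i j : Fin k) : Prop :=
  i < j ∧ ¬ZeroPair B i j ∧ ¬UnitPair B i j ∧ ¬CompositePair B i j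

/-!
Let `N = B - 1` and let `S` be the diagonal `±1` matrix of a `2`-colouring of `D`. Every edge of
`D` joins the two colour classes, so `S N S = -N` and hence `S B S = 1 - N`. As `N` is nilpotent,
`(1 - N)⁻¹ = ∑ Nᵐ`, which is entrywise nonnegative and dominates `N`. Therefore
`B⁻¹ = S (∑ Nᵐ) S` is signed by the colouring, and `|B⁻¹ i j| = (∑ Nᵐ) i j ≥ N i j`.
-/

namespace Matrix

section StrictlyUpper

variable {R : Type*} [Semiring R] {n : ℕ} {N : Matrix (Fin n) (Fin n) R}

theorem pow_apply_eq_zero_of_lt_add (hN : ∀ i j, j ≤ i → N i j = 0) :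
    ∀ (m : ℕ) {i j : Fin n}, (j : ℕ) < i + m → (N ^ m) i j = 0
  | 0, i, j, h => by
    rw [pow_zero, one_apply_ne (Fin.ne_of_gt (Fin.lt_def.mpr (by omega)))]
  | m + 1, i, j, h => by
    rw [pow_succ, mul_apply]
    refine Finset.sum_eq_zero fun k _ => ?_
    rcases lt_or_ge (k : ℕ) (i + m) with hk | hk
    · rw [pow_apply_eq_zero_of_lt_add hN m hk, zero_mul]
    · rw [hN k j (Fin.le_def.mpr (by omega)), mul_zero]

theorem pow_card_eq_zero_of_strictlyUpper (hN : ∀ i j, j ≤ i → N i j = 0) : N ^ n = 0 := by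
  ext i j
  exact pow_apply_eq_zero_of_lt_add hN n (by omega)

end StrictlyUpper

section GeomSum

variable {ι R : Type*} [Fintype ι] [DecidableEq ι] [Semiring R] [PartialOrder R]
  [IsOrderedRing R] {N : Matrix ι ι R}

theorem geom_sum_apply_nonneg (hN : ∀ i j, 0 ≤ N i j) (k : ℕ) (i j : ι) :
    0 ≤ (∑ m ∈ Finset.range k, N ^ m) i j := by
  rw [sum_apply]
  exact Finset.sum_nonneg fun m _ => pow_apply_nonneg hN m i j

theorem apply_le_geom_sum_apply (hN : ∀ i j, 0 ≤ N i j) {k : ℕ} (hk : 1 < k) (i j : ι) :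
    N i j ≤ (∑ m ∈ Finset.range k, N ^ m) i j := by
  rw [sum_apply]
  simpa using Finset.single_le_sum (fun m _ => pow_apply_nonneg hN m i j)
    (Finset.mem_range.mpr hk)

end GeomSum

section SignConjugation

variable {ι R : Type*} [Fintype ι] [DecidableEq ι] [CommRing R] {N : Matrix ι ι R}
  {σ : ι → R}

theorem diagonal_mul_mul_diagonal_apply (σ : ι → R) (M : Matrix ι ι R) (i j : ι) :
    (diagonal σ * M * diagonal σ) i j = σ i * M i j * σ j := by
  rw [mul_diagonal, diagonal_mul]

theorem abs_diagonal_mul_mul_diagonal_apply [LinearOrder R] [IsStrictOrderedRing R]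
    (hσ : ∀ i, |σ i| = 1) (M : Matrix ι ι R) (i j : ι) :
    |(diagonal σ * M * diagonal σ) i j| = |M i j| := by
  rw [diagonal_mul_mul_diagonal_apply, abs_mul, abs_mul, hσ, hσ, one_mul, mul_one]

theorem diagonal_mul_diagonal_eq_one (hσ : ∀ i, σ i * σ i = 1) :
    diagonal σ * diagonal σ = 1 := by
  rw [diagonal_mul_diagonal, ← diagonal_one]
  exact congrArg diagonal (funext hσ)

theorem diagonal_mul_mul_diagonal_eq_neg (hflip : ∀ i j, N i j ≠ 0 → σ i * σ j = -1) :
    diagonal σ * N * diagonal σ = -N := by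
  ext i j
  rw [diagonal_mul_mul_diagonal_apply, neg_apply]
  by_cases h : N i j = 0
  · simp [h]
  · linear_combination N i j * hflip i j h

theorem inv_one_add_eq_diagonal_mul_geom_sum_mul_diagonal {k : ℕ} (hNk : N ^ k = 0)
    (hσ : ∀ i, σ i * σ i = 1) (hflip : ∀ i j, N i j ≠ 0 → σ i * σ j = -1) :
    (1 + N)⁻¹ = diagonal σ * (∑ m ∈ Finset.range k, N ^ m) * diagonal σ := by
  have hDD := diagonal_mul_diagonal_eq_one hσ
  have hconj : diagonal σ * (1 + N) * diagonal σ = 1 - N := by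
    rw [mul_add, add_mul, mul_one, hDD, diagonal_mul_mul_diagonal_eq_neg hflip, sub_eq_add_neg]
  refine inv_eq_left_inv ?_
  calc diagonal σ * (∑ m ∈ Finset.range k, N ^ m) * diagonal σ * (1 + N)
      = diagonal σ * (∑ m ∈ Finset.range k, N ^ m) *
          (diagonal σ * (1 + N) * diagonal σ) * diagonal σ := by
        simp only [mul_assoc, hDD, mul_one]
    _ = 1 := by
        rw [hconj, mul_assoc (diagonal σ), geom_sum_mul_neg, hNk, sub_zero, mul_one, hDD]

end SignConjugation

end Matrix

theorem isSignable_diagonal_mul_mul_diagonal {k : ℕ} {s : Fin k → ℤ}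
    (hs : ∀ i, s i = 1 ∨ s i = -1) {P : Matrix (Fin k) (Fin k) ℤ}
    (hP : ∀ i j, 0 ≤ P i j) :
    IsSignable (diagonal s * P * diagonal s) := by
  have hunit : ∀ i, IsUnit (s i) := fun i => Int.isUnit_iff.mpr (hs i)
  have hss : ∀ i, s i * s i = 1 := fun i => Int.isUnit_mul_self (hunit i)
  refine ⟨s, hs, fun i j => ?_⟩
  rw [abs_diagonal_mul_mul_diagonal_apply fun i => Int.isUnit_iff_abs_eq.mp (hunit i),
    abs_of_nonneg (hP i j), diagonal_mul_mul_diagonal_apply]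
  linear_combination P i j * s j * s j * hss i + P i j * hss j

def boolSign (b : Bool) : ℤ := if b then -1 else 1

theorem boolSign_eq_one_or_eq_neg_one (b : Bool) : boolSign b = 1 ∨ boolSign b = -1 := by
  cases b <;> simp [boolSign]

theorem isUnit_boolSign (b : Bool) : IsUnit (boolSign b) :=
  Int.isUnit_iff.mpr (boolSign_eq_one_or_eq_neg_one b)

theorem boolSign_mul_boolSign_of_ne {a b : Bool} (h : a ≠ b) :
    boolSign a * boolSign b = -1 := by
  cases a <;> cases b <;> simp_all [boolSign]

section Unitriangular

variable {n : ℕ} {B : Matrix (Fin n) (Fin n) ℤ}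

theorem sub_one_apply_of_lt {i j : Fin n} (h : i < j) : (B - 1) i j = B i j := by
  rw [Matrix.sub_apply, one_apply_ne h.ne, sub_zero]

theorem sub_one_apply_eq_zero_of_le (h1 : ∀ i, B i i = 1)
    (h2 : ∀ i j : Fin n, j < i → B i j = 0)
    {i j : Fin n} (h : j ≤ i) : (B - 1) i j = 0 := by
  rcases h.lt_or_eq with h | rfl
  · rw [Matrix.sub_apply, h2 i j h, one_apply_ne h.ne', sub_zero]
  · rw [Matrix.sub_apply, h1, one_apply_eq, sub_self]

theorem sub_one_apply_nonneg (h1 : ∀ i, B i i = 1) (h2 : ∀ i j : Fin n, j < i → B i j = 0)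
    (h3 : ∀ i j : Fin n, i < j → 0 ≤ B i j) (i j : Fin n) : 0 ≤ (B - 1) i j := by
  rcases lt_or_ge i j with h | h
  · exact (sub_one_apply_of_lt h).symm ▸ h3 i j h
  · exact (sub_one_apply_eq_zero_of_le h1 h2 h).ge

theorem lt_and_one_le_of_sub_one_apply_ne_zero (h1 : ∀ i, B i i = 1)
    (h2 : ∀ i j : Fin n, j < i → B i j = 0) (h3 : ∀ i j : Fin n, i < j → 0 ≤ B i j)
    {i j : Fin n} (h : (B - 1) i j ≠ 0) : i < j ∧ 1 ≤ B i j := by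
  have hlt : i < j := lt_of_not_ge fun hji => h (sub_one_apply_eq_zero_of_le h1 h2 hji)
  have hpos := lt_of_le_of_ne (sub_one_apply_nonneg h1 h2 h3 i j) (Ne.symm h)
  rw [sub_one_apply_of_lt hlt] at hpos
  exact ⟨hlt, hpos⟩

end Unitriangular

theorem stmt6_general {n : ℕ} (B : Matrix (Fin n) (Fin n) ℤ)
    (h1 : ∀ i, B i i = 1) (h2 : ∀ i j : Fin n, j < i → B i j = 0)
    (h3 : ∀ i j : Fin n, i < j → 0 ≤ B i j)
    (hbip : ∃ c : Fin n → Bool, ∀ i j : Fin n, i < j → 1 ≤ B i j → c i ≠ c j) :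
    IsSignable B⁻¹ ∧ ∀ i j : Fin n, i < j → B i j ≤ |B⁻¹ i j| := by
  obtain ⟨c, hc⟩ := hbip
  have hN_nonneg := sub_one_apply_nonneg h1 h2 h3
  have hflip : ∀ i j, (B - 1) i j ≠ 0 → (boolSign ∘ c) i * (boolSign ∘ c) j = -1 :=
    fun i j hij =>
      have ⟨hlt, hedge⟩ := lt_and_one_le_of_sub_one_apply_ne_zero h1 h2 h3 hij
      boolSign_mul_boolSign_of_ne (hc i j hlt hedge)
  have hunit : ∀ i, IsUnit ((boolSign ∘ c) i) := fun i => isUnit_boolSign (c i)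
  have hinv : B⁻¹ = diagonal (boolSign ∘ c) * (∑ m ∈ Finset.range n, (B - 1) ^ m) *
      diagonal (boolSign ∘ c) := by
    rw [← inv_one_add_eq_diagonal_mul_geom_sum_mul_diagonal
      (pow_card_eq_zero_of_strictlyUpper fun i j => sub_one_apply_eq_zero_of_le h1 h2)
      (fun i => Int.isUnit_mul_self (hunit i)) hflip, add_sub_cancel]
  refine ⟨hinv ▸ isSignable_diagonal_mul_mul_diagonal
    (fun i => boolSign_eq_one_or_eq_neg_one (c i)) (geom_sum_apply_nonneg hN_nonneg n),
    fun i j hij => ?_⟩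
  calc B i j = (B - 1) i j := (sub_one_apply_of_lt hij).symm
    _ ≤ (∑ m ∈ Finset.range n, (B - 1) ^ m) i j :=
      apply_le_geom_sum_apply hN_nonneg (by omega) i j
    _ = |B⁻¹ i j| := by
      rw [hinv, abs_diagonal_mul_mul_diagonal_apply fun i => Int.isUnit_iff_abs_eq.mp (hunit i),
        abs_of_nonneg (geom_sum_apply_nonneg hN_nonneg n i j)]

/-- If `D` is bipartite, then `B` is signable and moreover
`B i j ≤ |(B⁻¹) i j|` for all `i < j` (`D` is a subgraph of its parity closure). -/
theorem stmt6 {n : ℕ} (hn : 1 ≤ n) (B : Matrix (Fin n) (Fin n) ℤ)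
    (h1 : ∀ i, B i i = 1) (h2 : ∀ i j : Fin n, j < i → B i j = 0)
    (h3 : ∀ i j : Fin n, i < j → 0 ≤ B i j)
    (hbip : ∃ c : Fin n → Bool, ∀ i j : Fin n, i < j → 1 ≤ B i j → c i ≠ c j) :
    IsSignable B⁻¹ ∧ ∀ i j : Fin n, i < j → B i j ≤ |B⁻¹ i j| :=
  stmt6_general B h1 h2 h3 hbip
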